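/- For all n ≥ 0 and all a, b, v: ∑_{κ=0}^{n} [n choose κ]_q a^κ (b +· v)^{n-κ} = ∑_{κ=0}^{n} [n choose κ]_q b^κ (a +· v)^{n-κ}, where (x +· y)^m = ∏_{i=0}^{m-1}(x + q^i y). -/

import Mathlib

/-! Write `S(a, b, v; n)` for `∑ κ, [n, κ] a^κ (b +· v)^(n-κ)`. Expanding `[n+1, κ+1]` by the
q-Pascal rule `[n, κ] + q^(κ+1) [n, κ+1]` and by its dual `q^(n-κ) [n, κ] + [n, κ+1]` gives
`S(a, b, v; n+1) = a S(a, b, v; n) + (b + v) S(qa, b, qv; n)` and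
`S(a, b, v; n+1) = b S(a, b, v; n) + (a + v) S(a, qb, qv; n)`.
The second recursion at `(a, b)` and the first at `(b, a)` have the same shape, so symmetry
follows by induction on `n`. -/

/-- The `q`-analog `[n]_q = 1 + q + ⋯ + q^(n-1)` of a natural number. -/
def qNum {R : Type*} [CommRing R] (q : R) (n : ℕ) : R := ∑ i ∈ Finset.range n, q ^ i

/-- The `q`-factorial `[n]! = [1][2]⋯[n]`. -/
def qFact {R : Type*} [CommRing R] (q : R) (n : ℕ) : R := ∏ i ∈ Finset.range n, qNum q (i + 1)

/-- The Gaussian (`q`-)binomial coefficient, via the `q`-Pascal recursion. -/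
def qBinom {R : Type*} [CommRing R] (q : R) : ℕ → ℕ → R
  | _, 0 => 1
  | 0, _ + 1 => 0
  | n + 1, k + 1 => qBinom q n k + q ^ (k + 1) * qBinom q n (k + 1)

/-- The `q`-shifted product `(1 −· p)^m = ∏_{i=0}^{m-1} (1 - p q^i)`. -/
def qProdSub {R : Type*} [CommRing R] (q p : R) (m : ℕ) : R :=
  ∏ i ∈ Finset.range m, (1 - p * q ^ i)

/-- The `q`-shifted power `(x +· y)^m = ∏_{i=0}^{m-1} (x + q^i y)`. -/
def qProdAdd {R : Type*} [CommRing R] (q x y : R) (m : ℕ) : R :=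
  ∏ i ∈ Finset.range m, (x + q ^ i * y)

open Finset

section

variable {R : Type*} [CommRing R] (q : R)

@[simp]
lemma qBinom_zero_right (n : ℕ) : qBinom q n 0 = 1 := by
  cases n <;> rfl

lemma qBinom_succ_succ (n k : ℕ) :
    qBinom q (n + 1) (k + 1) = qBinom q n k + q ^ (k + 1) * qBinom q n (k + 1) := rfl

lemma qBinom_eq_zero_of_lt {n k : ℕ} (h : n < k) : qBinom q n k = 0 := by
  induction n generalizing k with
  | zero => obtain ⟨k, rfl⟩ := Nat.exists_eq_add_of_lt h; rfl
  | succ n ih =>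
    obtain ⟨k, rfl⟩ := Nat.exists_eq_add_of_lt (Nat.zero_lt_of_lt h)
    rw [qBinom_succ_succ, ih (by omega), ih (by omega), mul_zero, add_zero]

lemma qBinom_add_succ_succ : ∀ i j : ℕ,
    qBinom q (i + j + 1) (i + 1) = q ^ j * qBinom q (i + j) i + qBinom q (i + j) (i + 1)
  | 0, 0 => by simp [qBinom]
  | 0, j + 1 => by
    have ih := qBinom_add_succ_succ 0 j
    simp only [zero_add, qBinom_zero_right] at ih ⊢
    linear_combination qBinom_succ_succ q (j + 1) 0 + q * ih - qBinom_succ_succ q j 0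
      + qBinom_zero_right q (j + 1) - qBinom_zero_right q j
  | i + 1, 0 => by
    rw [add_zero, pow_zero, one_mul, qBinom_succ_succ q (i + 1) (i + 1),
      qBinom_eq_zero_of_lt q (Nat.lt_succ_self (i + 1)), mul_zero, add_zero]
  | i + 1, j + 1 => by
    have h₁ := qBinom_add_succ_succ (i + 1) j
    have h₂ := qBinom_add_succ_succ i (j + 1)
    rw [show i + 1 + j = i + j + 1 by omega] at h₁
    rw [show i + (j + 1) = i + j + 1 by omega] at h₂
    rw [show i + 1 + (j + 1) = i + j + 1 + 1 by omega]
    linear_combination qBinom_succ_succ q (i + j + 1 + 1) (i + 1) + h₂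
      - q ^ (j + 1) * qBinom_succ_succ q (i + j + 1) i + q ^ (i + 2) * h₁
      - qBinom_succ_succ q (i + j + 1) (i + 1)

lemma sum_antidiagonal_succ_qBinom_mul (f : ℕ → ℕ → R) (n : ℕ) :
    ∑ p ∈ antidiagonal (n + 1), qBinom q (n + 1) p.1 * f p.1 p.2 =
      ∑ p ∈ antidiagonal n, qBinom q n p.1 * (f (p.1 + 1) p.2 + q ^ p.1 * f p.1 (p.2 + 1)) := by
  -- one sum over `i + j = n + 1`, split off once at `i = 0` and once at `j = 0`
  have shift := Nat.sum_antidiagonal_succ (n := n)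
    (f := fun p ↦ q ^ p.1 * qBinom q n p.1 * f p.1 p.2)
  rw [Nat.sum_antidiagonal_succ'] at shift
  simp only [qBinom_eq_zero_of_lt q n.lt_succ_self, qBinom_zero_right] at shift
  rw [Nat.sum_antidiagonal_succ]
  simp only [qBinom_zero_right, qBinom_succ_succ, add_mul, mul_add, sum_add_distrib,
    mul_left_comm (qBinom q n _) (q ^ _), ← mul_assoc]
  linear_combination -shift

lemma sum_antidiagonal_succ_qBinom_mul' (f : ℕ → ℕ → R) (n : ℕ) :
    ∑ p ∈ antidiagonal (n + 1), qBinom q (n + 1) p.1 * f p.1 p.2 =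
      ∑ p ∈ antidiagonal n, qBinom q n p.1 * (q ^ p.2 * f (p.1 + 1) p.2 + f p.1 (p.2 + 1)) := by
  have shift := Nat.sum_antidiagonal_succ (n := n) (f := fun p ↦ qBinom q n p.1 * f p.1 p.2)
  rw [Nat.sum_antidiagonal_succ'] at shift
  simp only [qBinom_eq_zero_of_lt q n.lt_succ_self, qBinom_zero_right] at shift
  have dual : ∀ p ∈ antidiagonal n, qBinom q (n + 1) (p.1 + 1) * f (p.1 + 1) p.2 =
      q ^ p.2 * qBinom q n p.1 * f (p.1 + 1) p.2 + qBinom q n (p.1 + 1) * f (p.1 + 1) p.2 := by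
    rintro ⟨i, j⟩ h
    obtain rfl : i + j = n := HasAntidiagonal.mem_antidiagonal.mp h
    rw [qBinom_add_succ_succ]
    ring
  rw [Nat.sum_antidiagonal_succ, sum_congr rfl dual]
  simp only [qBinom_zero_right, mul_add, sum_add_distrib,
    mul_left_comm (qBinom q n _) (q ^ _), ← mul_assoc]
  linear_combination -shift

lemma qProdAdd_succ (x y : R) (m : ℕ) :
    qProdAdd q x y (m + 1) = qProdAdd q x y m * (x + q ^ m * y) :=
  prod_range_succ _ _

lemma qProdAdd_succ' (x y : R) (m : ℕ) :
    qProdAdd q x y (m + 1) = (x + y) * qProdAdd q x (q * y) m := by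
  rw [qProdAdd, prod_range_succ', pow_zero, one_mul, mul_comm, qProdAdd]
  exact congrArg _ (prod_congr rfl fun i _ ↦ by ring)

lemma pow_mul_qProdAdd (x y : R) (m : ℕ) :
    q ^ m * qProdAdd q x y m = qProdAdd q (q * x) (q * y) m :=
  calc q ^ m * qProdAdd q x y m = ∏ i ∈ range m, q * (x + q ^ i * y) := by
        rw [qProdAdd, ← pow_card_mul_prod, card_range]
    _ = qProdAdd q (q * x) (q * y) m := prod_congr rfl fun i _ ↦ by ring

/-- Indexed by the antidiagonal `(κ, n - κ)`, which avoids truncated subtraction. -/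
def qBinomSum (a b v : R) (n : ℕ) : R :=
  ∑ p ∈ antidiagonal n, qBinom q n p.1 * (a ^ p.1 * qProdAdd q b v p.2)

lemma qBinomSum_eq_sum_range (a b v : R) (n : ℕ) :
    qBinomSum q a b v n =
      ∑ κ ∈ range (n + 1), qBinom q n κ * a ^ κ * qProdAdd q b v (n - κ) := by
  rw [qBinomSum, Nat.sum_antidiagonal_eq_sum_range_succ_mk]
  simp only [mul_assoc]

lemma qBinomSum_succ (a b v : R) (n : ℕ) :
    qBinomSum q a b v (n + 1) =
      a * qBinomSum q a b v n + (b + v) * qBinomSum q (q * a) b (q * v) n := by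
  rw [qBinomSum, sum_antidiagonal_succ_qBinom_mul q fun i j ↦ a ^ i * qProdAdd q b v j,
    qBinomSum, qBinomSum, mul_sum, mul_sum, ← sum_add_distrib]
  refine sum_congr rfl fun p _ ↦ ?_
  rw [qProdAdd_succ']
  ring

lemma qBinomSum_succ' (a b v : R) (n : ℕ) :
    qBinomSum q a b v (n + 1) =
      b * qBinomSum q a b v n + (a + v) * qBinomSum q a (q * b) (q * v) n := by
  rw [qBinomSum, sum_antidiagonal_succ_qBinom_mul' q fun i j ↦ a ^ i * qProdAdd q b v j,
    qBinomSum, qBinomSum, mul_sum, mul_sum, ← sum_add_distrib]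
  refine sum_congr rfl fun p _ ↦ ?_
  rw [qProdAdd_succ, ← pow_mul_qProdAdd]
  ring

theorem qBinomSum_comm (a b v : R) (n : ℕ) : qBinomSum q a b v n = qBinomSum q b a v n := by
  induction n generalizing a b v with
  | zero => simp [qBinomSum, qProdAdd]
  | succ n ih => rw [qBinomSum_succ', qBinomSum_succ q b, ih b a v, ih a (q * b) (q * v)]

end

/-- Symmetry identity (2.10):
`∑ [n choose κ] a^κ (b +· v)^{n-κ} = ∑ [n choose κ] b^κ (a +· v)^{n-κ}`. -/
theorem qBinom_sum_symm {R : Type*} [CommRing R] (q a b v : R) (n : ℕ) :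
    ∑ κ ∈ Finset.range (n + 1), qBinom q n κ * a ^ κ * qProdAdd q b v (n - κ) =
      ∑ κ ∈ Finset.range (n + 1), qBinom q n κ * b ^ κ * qProdAdd q a v (n - κ) := by
  rw [← qBinomSum_eq_sum_range, ← qBinomSum_eq_sum_range, qBinomSum_comm]
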